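/- (Rank-boundary sandwich.) For every n ≥ 2 and every r > log(1 + log n), the rank boundary satisfies Λ_n^{(r)} ≤ B_n^{rank}(r) ≤ Λ_n^{(r − log(1 + log n))}, where B_n^{rank}(r) := sup{ β ≥ 0 : log Z_n(β) ≥ r }. -/
import Mathlib


open Filter MeasureTheory
open scoped ENNReal

/-- Maximum score `z_n^*`. -/
noncomputable def zmax (n : ℕ) (z : Fin n → ℝ) : ℝ := sSup (Set.range z)

/-- Gap `g_{n,j} = z_n^* - z_{n,j}`. -/
noncomputable def gap (n : ℕ) (z : Fin n → ℝ) (j : Fin n) : ℝ := zmax n z - z j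

/-- Cumulative gap-counting function `N_n(t)`. -/
noncomputable def Ncount (n : ℕ) (z : Fin n → ℝ) (t : ℝ) : ℕ :=
  {j : Fin n | gap n z j ≤ t}.ncard

/-- Normalised partition function `Z_n(β)`. -/
noncomputable def Zfun (n : ℕ) (z : Fin n → ℝ) (β : ℝ) : ℝ :=
  ∑ j : Fin n, Real.exp (-(β * gap n z j))

/-- Softmax probabilities `p_{n,j}(β)`. -/
noncomputable def softmaxP (n : ℕ) (z : Fin n → ℝ) (β : ℝ) (j : Fin n) : ℝ :=
  Real.exp (β * z j) / ∑ ℓ : Fin n, Real.exp (β * z ℓ)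

/-- Shannon entropy `H_n(β)`. -/
noncomputable def entropyH (n : ℕ) (z : Fin n → ℝ) (β : ℝ) : ℝ :=
  -∑ j : Fin n, softmaxP n z β j * Real.log (softmaxP n z β j)

/-- The set of values `log N_n(t) / t` over `t > 0`, whose supremum is `Λ_n`. -/
def lamSet (n : ℕ) (z : Fin n → ℝ) : Set ℝ :=
  {r | ∃ t : ℝ, 0 < t ∧ r = Real.log (Ncount n z t) / t}

/-- Second-largest entry of a finite vector (equals the largest in case of ties). -/
noncomputable def secondLargest (n : ℕ) (v : Fin n → ℝ) : ℝ :=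
  sInf (Set.range fun i => sSup (v '' {j | j ≠ i}))

/-- Top-two weight gap `D_n(β)`. -/
noncomputable def Dgap (n : ℕ) (z : Fin n → ℝ) (β : ℝ) : ℝ :=
  sSup (Set.range (softmaxP n z β)) - secondLargest n (softmaxP n z β)

/-- Rank gap `G_n(β) = max_{i,j} |p_{n,i}(β) - p_{n,j}(β)|`. -/
noncomputable def Ggap (n : ℕ) (z : Fin n → ℝ) (β : ℝ) : ℝ :=
  sSup {x | ∃ i j : Fin n, x = |softmaxP n z β i - softmaxP n z β j|}

/-- Resolved accumulation scale `Λ_n^{(r)}` (with `sup ∅ = 0`), valued in `ℝ≥0∞`. -/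
noncomputable def resolvedLam (n : ℕ) (z : Fin n → ℝ) (r : ℝ) : ℝ≥0∞ :=
  ⨆ t ∈ {t : ℝ | 0 < t ∧ r < Real.log (Ncount n z t)},
    ENNReal.ofReal ((Real.log (Ncount n z t) - r) / t)

/-- Laplace envelope `S_n(β) = sup_{t ≥ 0} (log N_n(t) - β t)`. -/
noncomputable def Sfun (n : ℕ) (z : Fin n → ℝ) (β : ℝ) : ℝ :=
  sSup {x | ∃ t : ℝ, 0 ≤ t ∧ x = Real.log (Ncount n z t) - β * t}

/-- Rank boundary `B_n^rank(r) = sup {β ≥ 0 : log Z_n(β) ≥ r}`, valued in `ℝ≥0∞`. -/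
noncomputable def rankBoundary (n : ℕ) (z : Fin n → ℝ) (r : ℝ) : ℝ≥0∞ :=
  ⨆ β ∈ {β : ℝ | 0 ≤ β ∧ r ≤ Real.log (Zfun n z β)}, ENNReal.ofReal β

/-- `X_n ≍ (log n)^ξ`. -/
def IsLogAsymp (X : ℕ → ℝ) (ξ : ℝ) : Prop :=
  ∃ c₁ c₂ : ℝ, 0 < c₁ ∧ c₁ ≤ c₂ ∧
    ∀ᶠ n : ℕ in Filter.atTop,
      c₁ * Real.log n ^ ξ ≤ X n ∧ X n ≤ c₂ * Real.log n ^ ξ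

section Aux
variable {n : ℕ} {z : Fin n → ℝ}

lemma gap_nonneg' (j : Fin n) : 0 ≤ gap n z j := by
  have h : z j ≤ zmax n z := le_csSup (Set.finite_range z).bddAbove ⟨j, rfl⟩
  simp only [gap]; linarith

lemma Ncount_eq_card (t : ℝ) [DecidablePred fun j : Fin n => gap n z j ≤ t] :
    Ncount n z t = (Finset.univ.filter fun j : Fin n => gap n z j ≤ t).card := by
  rw [Ncount, ← Set.ncard_coe_finset]
  congr 1; ext j; simp

lemma Ncount_mono' : Monotone (Ncount n z) := fun s t hst =>
  Set.ncard_le_ncard (fun j hj => le_trans hj hst) (Set.toFinite _)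

lemma exists_gap_zero (hn : 0 < n) : ∃ j : Fin n, gap n z j = 0 := by
  have hne : Nonempty (Fin n) := ⟨⟨0, hn⟩⟩
  obtain ⟨j, hj⟩ := Finite.exists_max z
  refine ⟨j, ?_⟩
  have h1 : zmax n z ≤ z j := csSup_le (Set.range_nonempty z) (by rintro _ ⟨i, rfl⟩; exact hj i)
  have h2 : z j ≤ zmax n z := le_csSup (Set.finite_range z).bddAbove ⟨j, rfl⟩
  simp only [gap]; linarith

lemma one_le_Ncount (hn : 0 < n) {t : ℝ} (ht : 0 ≤ t) : 1 ≤ Ncount n z t := by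
  obtain ⟨j, hj⟩ := exists_gap_zero (z := z) hn
  have hsub : ({j} : Set (Fin n)) ⊆ {i | gap n z i ≤ t} := by
    intro i hi; simp only [Set.mem_singleton_iff] at hi; subst hi
    simp only [Set.mem_setOf_eq, hj]; exact ht
  calc 1 = ({j} : Set (Fin n)).ncard := (Set.ncard_singleton j).symm
    _ ≤ _ := Set.ncard_le_ncard hsub (Set.toFinite _)

lemma rank_le_Ncount (k : Fin n) :
    (k : ℕ) + 1 ≤ Ncount n z (gap n z (Tuple.sort (gap n z) k)) := by
  classical
  set σ := Tuple.sort (gap n z) with hσ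
  rw [Ncount_eq_card]
  have hmono := Tuple.monotone_sort (gap n z)
  have hsub : Finset.image σ (Finset.Iic k) ⊆
      Finset.univ.filter fun j : Fin n => gap n z j ≤ gap n z (σ k) := by
    intro j hj
    simp only [Finset.mem_image, Finset.mem_Iic] at hj
    obtain ⟨i, hik, rfl⟩ := hj
    simp only [Finset.mem_filter, Finset.mem_univ, true_and]
    exact hmono hik
  calc (k : ℕ) + 1 = (Finset.Iic k).card := (Fin.card_Iic k).symm
    _ = (Finset.image σ (Finset.Iic k)).card := (Finset.card_image_of_injective _ σ.injective).symm
    _ ≤ _ := Finset.card_le_card hsub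

lemma Zfun_le_card {β : ℝ} (hβ : 0 ≤ β) : Zfun n z β ≤ n := by
  have : Zfun n z β ≤ ∑ _j : Fin n, (1 : ℝ) := by
    refine Finset.sum_le_sum fun j _ => ?_
    rw [Real.exp_le_one_iff]
    have := gap_nonneg' (z := z) j
    nlinarith
  simpa using this

end Aux

lemma sum_min_le (n : ℕ) {C : ℝ} (hC1 : 1 ≤ C) (hCn : C ≤ n) :
    ∑ k ∈ Finset.range n, min 1 (C / (k + 1)) ≤ C * (1 + Real.log n - Real.log C) := by
  have hC0 : 0 < C := lt_of_lt_of_le one_pos hC1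
  set F : ℝ → ℝ := fun t => if t ≤ C then t else C * (1 + Real.log t - Real.log C) with hF
  have key : ∀ k : ℕ, min 1 (C / (k + 1)) ≤ F ((k : ℝ) + 1) - F k := by
    intro k
    have hK : (0 : ℝ) < (k : ℝ) + 1 := by positivity
    by_cases h1 : ((k : ℝ) + 1) ≤ C
    · have h2 : (k : ℝ) ≤ C := by linarith
      have hd : F ((k : ℝ) + 1) - F k = 1 := by
        simp only [hF]; rw [if_pos h1, if_pos h2]; ring
      rw [hd]; exact min_le_left _ _
    · push_neg at h1
      have hFk1 : F ((k : ℝ) + 1) = C * (1 + Real.log ((k : ℝ) + 1) - Real.log C) := by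
        simp only [hF]; rw [if_neg (not_le.2 h1)]
      by_cases h2 : (k : ℝ) ≤ C
      · -- k ≤ C < k+1
        have hFk : F k = k := by simp only [hF]; rw [if_pos h2]
        rw [hFk1, hFk]
        refine le_trans (min_le_right _ _) ?_
        have hlog : Real.log C - Real.log ((k : ℝ) + 1) ≤ C / ((k : ℝ) + 1) - 1 := by
          rw [← Real.log_div hC0.ne' hK.ne']
          exact Real.log_le_sub_one_of_pos (by positivity)
        have hq : C / ((k : ℝ) + 1) * ((k : ℝ) + 1) = C := div_mul_cancel₀ _ hK.ne'
        nlinarith [mul_le_mul_of_nonneg_left hlog hC0.le,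
          mul_nonneg (sub_nonneg.2 h2) (sub_nonneg.2 h1.le), hq, hK, hC0]
      · -- C < k
        push_neg at h2
        have hk0 : (0 : ℝ) < k := lt_trans hC0 h2
        have hFk : F k = C * (1 + Real.log k - Real.log C) := by
          simp only [hF]; rw [if_neg (not_le.2 h2)]
        rw [hFk1, hFk]
        refine le_trans (min_le_right _ _) ?_
        have hlog : Real.log (k : ℝ) - Real.log ((k : ℝ) + 1) ≤ (k : ℝ) / ((k : ℝ) + 1) - 1 := by
          rw [← Real.log_div hk0.ne' hK.ne']
          exact Real.log_le_sub_one_of_pos (by positivity)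
        have hq : (k : ℝ) / ((k : ℝ) + 1) * ((k : ℝ) + 1) = k := div_mul_cancel₀ _ hK.ne'
        have hq2 : C / ((k : ℝ) + 1) * ((k : ℝ) + 1) = C := div_mul_cancel₀ _ hK.ne'
        nlinarith [mul_le_mul_of_nonneg_left hlog hC0.le, hq, hq2, hK, hC0]
  have hsum : ∑ k ∈ Finset.range n, min 1 (C / (k + 1)) ≤ F n - F ((0:ℕ):ℝ) := by
    rw [← Finset.sum_range_sub (fun m : ℕ => F m) n]
    exact Finset.sum_le_sum fun k _ => by simpa [Nat.cast_add, Nat.cast_one] using key k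
  have hF0 : F ((0:ℕ):ℝ) = 0 := by
    simp only [hF, Nat.cast_zero]; rw [if_pos hC0.le]
  have hFn : F n ≤ C * (1 + Real.log n - Real.log C) := by
    simp only [hF]
    by_cases h : (n : ℝ) ≤ C
    · rw [if_pos h]
      have he : (n : ℝ) = C := le_antisymm h hCn
      rw [he]; nlinarith [Real.log_le_sub_one_of_pos hC0]
    · rw [if_neg h]
  have := hsum.trans (by linarith : F (n:ℝ) - F ((0:ℕ):ℝ) ≤ C * (1 + Real.log n - Real.log C))
  exact this


lemma exists_log_Ncount_gt (n : ℕ) (hn : 2 ≤ n) (z : Fin n → ℝ) {β r' : ℝ} (hβ : 0 < β)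
    (hr' : 0 < r') (hZ : Real.exp r' * (1 + Real.log n) ≤ Zfun n z β) :
    ∃ t : ℝ, 0 ≤ t ∧ r' + β * t < Real.log (Ncount n z t) := by
  by_contra hcon
  push_neg at hcon
  set C := Real.exp r' with hCdef
  have hC0 : 0 < C := Real.exp_pos _
  have hC1 : 1 ≤ C := Real.one_le_exp hr'.le
  have hlogn : 0 < Real.log n := Real.log_pos (by exact_mod_cast hn)
  have hZn : Zfun n z β ≤ n := Zfun_le_card hβ.le
  have hCn : C ≤ n := by nlinarith
  -- per-term bound after sorting
  set σ := Tuple.sort (gap n z) with hσ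
  have hterm : ∀ k : Fin n,
      Real.exp (-(β * gap n z (σ k))) ≤ min 1 (C / ((k : ℕ) + 1)) := by
    intro k
    set t := gap n z (σ k) with htdef
    have ht0 : 0 ≤ t := gap_nonneg' _
    have hN1 : 1 ≤ Ncount n z t := one_le_Ncount (by omega) ht0
    have hNk : ((k : ℕ) : ℝ) + 1 ≤ (Ncount n z t : ℝ) := by
      exact_mod_cast rank_le_Ncount (z := z) k
    have hNpos : (0 : ℝ) < (Ncount n z t : ℝ) := by positivity
    have hexp : (0 : ℝ) < Real.exp (β * t) := Real.exp_pos _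
    have h1 : (Ncount n z t : ℝ) ≤ C * Real.exp (β * t) := by
      rw [hCdef, ← Real.exp_add]
      exact (Real.log_le_iff_le_exp hNpos).1 (hcon t ht0)
    refine le_min ?_ ?_
    · rw [Real.exp_le_one_iff]; nlinarith
    · have h2 : Real.exp (-(β * t)) ≤ C / (Ncount n z t : ℝ) := by
        rw [Real.exp_neg, inv_eq_one_div, div_le_div_iff₀ hexp hNpos]
        nlinarith
      refine h2.trans ?_
      exact div_le_div_of_nonneg_left hC0.le (by positivity) hNk
  have hZsum : Zfun n z β ≤ ∑ k ∈ Finset.range n, min 1 (C / (k + 1)) := by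
    have heq : Zfun n z β = ∑ k : Fin n, Real.exp (-(β * gap n z (σ k))) :=
      (Equiv.sum_comp σ (fun j => Real.exp (-(β * gap n z j)))).symm
    rw [heq, ← Fin.sum_univ_eq_sum_range (fun m : ℕ => min 1 (C / (m + 1))) n]
    exact Finset.sum_le_sum fun k _ => hterm k
  have hfinal : Zfun n z β ≤ C * (1 + Real.log n - Real.log C) :=
    hZsum.trans (sum_min_le n hC1 hCn)
  rw [Real.log_exp] at hfinal
  linarith [mul_pos hC0 hr']


theorem stmt15 (n : ℕ) (hn : 2 ≤ n) (z : Fin n → ℝ) (r : ℝ)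
    (hr : Real.log (1 + Real.log n) < r) :
    resolvedLam n z r ≤ rankBoundary n z r ∧
      rankBoundary n z r ≤ resolvedLam n z (r - Real.log (1 + Real.log n)) := by
  classical
  have hn1 : (1:ℝ) < n := by exact_mod_cast hn.trans' (by norm_num)
  have hlogn : 0 < Real.log n := Real.log_pos hn1
  have hlog1 : 0 < 1 + Real.log n := by linarith
  constructor
  · simp only [resolvedLam, rankBoundary]
    refine iSup₂_le fun t ht => ?_
    obtain ⟨ht0, htr⟩ := ht
    set N := Ncount n z t with hNdef
    have hN1 : 1 ≤ N := one_le_Ncount (by omega) ht0.le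
    have hN0 : (0:ℝ) < (N:ℝ) := by exact_mod_cast hN1
    set β := (Real.log N - r) / t with hβdef
    have hβpos : 0 < β := div_pos (by linarith) ht0
    have hβt : β * t = Real.log N - r := by
      rw [hβdef]; field_simp
    have hlow : (N:ℝ) * Real.exp (-(β * t)) ≤ Zfun n z β := by
      have hNcard : N = (Finset.univ.filter fun j : Fin n => gap n z j ≤ t).card :=
        Ncount_eq_card t
      calc (N:ℝ) * Real.exp (-(β * t))
          = ∑ _j ∈ Finset.univ.filter (fun j : Fin n => gap n z j ≤ t),
              Real.exp (-(β * t)) := by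
            rw [Finset.sum_const, hNcard, nsmul_eq_mul]
        _ ≤ ∑ j ∈ Finset.univ.filter (fun j : Fin n => gap n z j ≤ t),
              Real.exp (-(β * gap n z j)) := by
            refine Finset.sum_le_sum fun j hj => ?_
            have hjt := (Finset.mem_filter.1 hj).2
            have : β * gap n z j ≤ β * t := by nlinarith
            exact Real.exp_le_exp.2 (by linarith)
        _ ≤ Zfun n z β := Finset.sum_le_sum_of_subset_of_nonneg (Finset.filter_subset _ _)
            (fun j _ _ => (Real.exp_pos _).le)
    have hlogZ : r ≤ Real.log (Zfun n z β) := by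
      have hpos : (0:ℝ) < (N:ℝ) * Real.exp (-(β * t)) := by positivity
      have h := Real.log_le_log hpos hlow
      rw [Real.log_mul hN0.ne' (Real.exp_ne_zero _), Real.log_exp] at h
      linarith
    exact le_biSup _ (⟨hβpos.le, hlogZ⟩ : β ∈ {β : ℝ | 0 ≤ β ∧ r ≤ Real.log (Zfun n z β)})
  · simp only [resolvedLam, rankBoundary]
    refine iSup₂_le fun β hβ => ?_
    obtain ⟨hβ0, hlogZ⟩ := hβ
    rcases eq_or_lt_of_le hβ0 with h | hβpos
    · simp [← h]
    set r' := r - Real.log (1 + Real.log n) with hr'def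
    have hr'pos : 0 < r' := by rw [hr'def]; linarith
    have hZpos : 0 < Zfun n z β :=
      Finset.sum_pos (fun j _ => Real.exp_pos _) ⟨⟨0, by omega⟩, Finset.mem_univ _⟩
    have hZge : Real.exp r ≤ Zfun n z β := by
      rw [← Real.exp_log hZpos]; exact Real.exp_le_exp.2 hlogZ
    have hexp_r : Real.exp r = Real.exp r' * (1 + Real.log n) := by
      rw [← Real.exp_log hlog1, ← Real.exp_add]
      congr 1; rw [hr'def]; ring
    obtain ⟨t₀, ht₀0, ht₀⟩ := exists_log_Ncount_gt n hn z hβpos hr'pos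
      (by rw [← hexp_r]; exact hZge)
    set t₁ := (Real.log (Ncount n z t₀) - r') / β with ht₁def
    have hβt₁ : β * t₁ = Real.log (Ncount n z t₀) - r' := by
      rw [ht₁def]; field_simp
    have ht₀lt : t₀ < t₁ := by nlinarith
    have ht₁pos : 0 < t₁ := lt_of_le_of_lt ht₀0 ht₀lt
    have hNmono : ((Ncount n z t₀ : ℕ) : ℝ) ≤ ((Ncount n z t₁ : ℕ) : ℝ) := by
      exact_mod_cast Ncount_mono' (z := z) ht₀lt.le
    have hN₀pos : (0:ℝ) < ((Ncount n z t₀ : ℕ) : ℝ) := by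
      have h1 := one_le_Ncount (n := n) (z := z) (by omega) ht₀0
      exact_mod_cast h1
    have hloglog : Real.log (Ncount n z t₀) ≤ Real.log (Ncount n z t₁) :=
      Real.log_le_log hN₀pos hNmono
    have hmem : t₁ ∈ {t : ℝ | 0 < t ∧ r' < Real.log (Ncount n z t)} := by
      refine ⟨ht₁pos, ?_⟩
      nlinarith [mul_pos hβpos ht₁pos]
    have hβle : β ≤ (Real.log (Ncount n z t₁) - r') / t₁ := by
      rw [le_div_iff₀ ht₁pos]
      nlinarith
    calc ENNReal.ofReal β
        ≤ ENNReal.ofReal ((Real.log (Ncount n z t₁) - r') / t₁) :=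
          ENNReal.ofReal_le_ofReal hβle
      _ ≤ _ := le_biSup (fun t => ENNReal.ofReal ((Real.log (Ncount n z t) - r') / t)) hmem
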